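/- arXiv:1109.2450 — 4 statements merged into one kernel-verified Lean document; each statement's English description precedes it below -/
import Mathlib

section
/- Let p, L be positive integers and c_1, …, c_p pairwise distinct nonzero complex numbers. Consider the pL × pL matrix whose rows are indexed by k = 1, …, pL and columns by pairs (j,q) with 1 ≤ j ≤ p, 0 ≤ q ≤ L−1, with entry binom(k+L, q) · c_j^{k+L−q}. Then this matrix is invertible. -/
/-!
A vanishing combination `∑ₖ vₖ · (row k)` says that `P = X ^ (L + 1) * ∑ₖ vₖ Xᵏ` has its
derivatives of order `m < L` vanishing at every `c j`, because the `(j, m)` entry of row `k` is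
`(1 / m!) · (d/dX)ᵐ X ^ (k + 1 + L)` evaluated at `c j`. So `(X - c j) ^ L` divides `P`, hence divides
`Q = ∑ₖ vₖ Xᵏ` as `c j ≠ 0`. These factors are pairwise coprime and their product has degree
`p * L > deg Q`, so `Q = 0`, i.e. `v = 0`.
-/

open Polynomial
open scoped Nat

namespace Polynomial

theorem eval_iterate_derivative_X_pow {R : Type*} [CommSemiring R] (m n : ℕ) (x : R) :
    (derivative^[m] (X ^ n : R[X])).eval x = m ! * (n.choose m * x ^ (n - m)) := by
  rw [iterate_derivative_X_pow_eq_smul, eval_smul, eval_pow, eval_X,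
    Nat.descFactorial_eq_factorial_mul_choose, smul_eq_mul]
  push_cast
  ring

theorem eval_iterate_derivative_X_pow_mul_ofFn {R : Type*} [CommSemiring R] [DecidableEq R]
    (s m n : ℕ) (v : Fin n → R) (x : R) :
    (derivative^[m] (X ^ s * ofFn n v)).eval x
      = m ! * ∑ k : Fin n, v k * ((k + s : ℕ).choose m * x ^ (k + s - m)) := by
  have hsum : X ^ s * ofFn n v = ∑ k : Fin n, C (v k) * X ^ (k + s : ℕ) := by
    rw [ofFn_eq_sum_monomial, Finset.mul_sum]
    refine Finset.sum_congr rfl fun k _ ↦ ?_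
    rw [← C_mul_X_pow_eq_monomial, pow_add]
    ring
  rw [hsum, iterate_derivative_sum, eval_finsetSum, Finset.mul_sum]
  refine Finset.sum_congr rfl fun k _ ↦ ?_
  rw [iterate_derivative_C_mul, eval_mul, eval_C, eval_iterate_derivative_X_pow]
  ring

theorem X_sub_C_pow_dvd_of_iterate_derivative_eval_eq_zero {R : Type*} [CommRing R] [IsDomain R]
    [CharZero R] {P : R[X]} {t : R} {n : ℕ} (h : ∀ m < n, (derivative^[m] P).eval t = 0) :
    (X - C t) ^ n ∣ P := by
  rcases eq_or_ne P 0 with rfl | hP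
  · exact dvd_zero _
  rcases n with _ | n
  · simp
  rw [← le_rootMultiplicity_iff hP]
  exact lt_rootMultiplicity_of_isRoot_iterate_derivative hP fun m hm ↦ h m (by omega)

theorem X_sub_C_pow_dvd_of_dvd_X_pow_mul {K : Type*} [Field K] {t : K} (ht : t ≠ 0) {n s : ℕ}
    {Q : K[X]} (h : (X - C t) ^ n ∣ X ^ s * Q) : (X - C t) ^ n ∣ Q := by
  have hcop : IsCoprime (X - C t) (X - C 0) := isCoprime_X_sub_C_of_isUnit_sub (by simpa using ht)
  rw [map_zero, sub_zero] at hcop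
  exact hcop.pow.dvd_of_dvd_mul_left h

theorem eq_zero_of_forall_X_sub_C_pow_dvd {K ι : Type*} [Field K] [Fintype ι] {c : ι → K}
    (hc : Function.Injective c) {n : ℕ} {Q : K[X]} (hQ : Q.degree < (Fintype.card ι * n : ℕ))
    (h : ∀ j, (X - C (c j)) ^ n ∣ Q) : Q = 0 := by
  refine eq_zero_of_dvd_of_degree_lt
    (Fintype.prod_dvd_of_coprime (fun i j hij ↦ (pairwise_coprime_X_sub_C hc hij).pow) h) ?_
  rw [degree_prod]
  simpa [degree_pow] using hQ

theorem eq_zero_of_iterate_derivative_X_pow_mul_eval_eq_zero {K ι : Type*} [Field K] [CharZero K]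
    [Fintype ι] {c : ι → K} (hc : Function.Injective c) (hc0 : ∀ j, c j ≠ 0) {L s : ℕ} {Q : K[X]}
    (hQ : Q.degree < (Fintype.card ι * L : ℕ))
    (h : ∀ j, ∀ m < L, (derivative^[m] (X ^ s * Q)).eval (c j) = 0) : Q = 0 :=
  eq_zero_of_forall_X_sub_C_pow_dvd hc hQ fun j ↦
    X_sub_C_pow_dvd_of_dvd_X_pow_mul (hc0 j)
      (X_sub_C_pow_dvd_of_iterate_derivative_eval_eq_zero (h j))

end Polynomial

theorem confluent_vandermonde_invertible_general
    (p L : ℕ)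
    (c : Fin p → ℂ) (hc : Function.Injective c) (hc0 : ∀ j, c j ≠ 0) :
    IsUnit (Matrix.of (fun (k idx : Fin (p * L)) =>
      let jq := finProdFinEquiv.symm idx
      ((Nat.choose ((k : ℕ) + 1 + L) (jq.2 : ℕ) : ℂ))
        * c jq.1 ^ ((k : ℕ) + 1 + L - (jq.2 : ℕ)))) := by
  classical
  rw [← Matrix.linearIndependent_rows_iff_isUnit, Fintype.linearIndependent_iff]
  intro v hv
  have hcol : ∀ j (q : Fin L), ∑ k : Fin (p * L),
      v k * ((k + (L + 1) : ℕ).choose q * c j ^ (k + (L + 1) - q)) = 0 := fun j q ↦ by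
    simpa only [Finset.sum_apply, Pi.smul_apply, Matrix.row_apply, Matrix.of_apply, smul_eq_mul,
      Equiv.symm_apply_apply, Pi.zero_apply, add_assoc, add_comm 1 L] using
      congrFun hv (finProdFinEquiv (j, q))
  have hQ : ofFn (p * L) v = 0 := by
    refine eq_zero_of_iterate_derivative_X_pow_mul_eval_eq_zero hc hc0 (s := L + 1)
      (by simpa using ofFn_degree_lt v) fun j m hm ↦ ?_
    rw [eval_iterate_derivative_X_pow_mul_ofFn, hcol j ⟨m, hm⟩, mul_zero]
  exact congrFun (injective_ofFn _ (hQ.trans (ofFn_zero _).symm))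

theorem confluent_vandermonde_invertible
    (p L : ℕ) (hp : 0 < p) (hL : 0 < L)
    (c : Fin p → ℂ) (hc : Function.Injective c) (hc0 : ∀ j, c j ≠ 0) :
    IsUnit (Matrix.of (fun (k idx : Fin (p * L)) =>
      let jq := finProdFinEquiv.symm idx
      ((Nat.choose ((k : ℕ) + 1 + L) (jq.2 : ℕ) : ℂ))
        * c jq.1 ^ ((k : ℕ) + 1 + L - (jq.2 : ℕ)))) :=
  confluent_vandermonde_invertible_general p L c hc hc0
end

section
/- If M ∈ Mod(b) admits a Demazure flag (a filtration whose successive quotients are Demazure modules V_{w_j}(λ_j)), then for every Weyl group element w, the module D_w M admits a Demazure flag. -/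
/-!
STATEMENT 10: If `M ∈ Mod(b)` admits a Demazure flag (a filtration
`0 = M₀ ⊆ ⋯ ⊆ M_k = M` whose successive quotients are Demazure modules —
encoded inductively via short exact sequences `0 → M' → M → V → 0` with `V`
Demazure), then for every Weyl group element `w` (i.e. every word
`l = [i_k, …, i_1]` over the index set, covering in particular the reduced
expressions of `w`), the module `D_w M = D_{i_k} ⋯ D_{i_1} M` admits a
Demazure flag.  Given facts (per CONTEXT): `D_i` of a Demazure module is a
Demazure module (up to isomorphism, `IsDem` being closed under isomorphism),
and `D_i` is exact on short exact sequences whose third term is Demazure.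
-/

open CategoryTheory

/-- `HasFlag P M`: `M` has a finite filtration with successive quotients
satisfying `P` (e.g. a Demazure flag). -/
inductive HasFlag {C : Type*} [Category C] [Limits.HasZeroMorphisms C]
    (P : C → Prop) : C → Prop
  | zero {M : C} (h : Limits.IsZero M) : HasFlag P M
  | step {M' M V : C} (f : M' ⟶ M) (g : M ⟶ V) (w : f ≫ g = 0)
      (hse : (ShortComplex.mk f g w).ShortExact) (hV : P V)
      (hM' : HasFlag P M') : HasFlag P M

/-- Composite of the Joseph functors along a word, rightmost letter applied first. -/
def compAlong {C : Type*} [Category C] {I : Type*} (Di : I → C ⥤ C) : List I → C ⥤ C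
  | [] => Functor.id C
  | i :: l => compAlong Di l ⋙ Di i

theorem demazure_flag_stable_under_joseph
    {C : Type*} [Category C] [Abelian C] {I : Type*}
    (Di : I → C ⥤ C) [∀ i, (Di i).Additive]
    (IsDem : C → Prop)
    (hIso : ∀ {M N : C}, (M ≅ N) → IsDem N → IsDem M)
    (hDem : ∀ (i : I) (V : C), IsDem V → IsDem ((Di i).obj V))
    (hexact : ∀ (i : I) (S : ShortComplex C), S.ShortExact → IsDem S.X₃ →
      (S.map (Di i)).ShortExact)
    (l : List I) (M : C) (hM : HasFlag IsDem M) :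
    HasFlag IsDem ((compAlong Di l).obj M) := by
  induction l with
  | nil => exact hM
  | cons i l ih =>
      show HasFlag IsDem ((Di i).obj ((compAlong Di l).obj M))
      generalize (compAlong Di l).obj M = N at ih
      clear hM
      induction ih with
      | zero h => exact HasFlag.zero ((Di i).map_isZero h)
      | step f g w hse hV hM' ihM' =>
          exact HasFlag.step ((Di i).map f) ((Di i).map g)
            (by rw [← Functor.map_comp, w, Functor.map_zero])
            (hexact i _ hse hV) (hDem i _ hV) ihM'
end

section
/- If M ∈ Mod(b) has a Demazure flag, then for every Weyl group element w the character identity ch D_w M = D_w(ch M) holds, where on the right D_w is the Demazure operator on Z[P]. -/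
/-!
STATEMENT 11: If `M ∈ Mod(b)` has a Demazure flag, then for every Weyl group
element `w` (i.e. every word `l` over the index set, covering in particular
the reduced expressions of `w`) the character identity
`ch (D_w M) = D_w (ch M)` holds, where on the left `D_w` is the composite of
Joseph functors along `l` and on the right the composite of Demazure
operators `Dop` on `ℤ[P]` (an abstract commutative ring `A`).
Given facts (per CONTEXT): `ch` is additive on short exact sequences,
isomorphism-invariant and vanishes on zero objects; the Demazure character
formula at the level of single Demazure modules
(`ch (D_i V_w(λ)) = D_i (ch V_w(λ))`, which encapsulates
`ch V_w(λ) = D_w(e^λ)`, `D_i² = D_i` and the proposition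
`D_i V_w(λ) ≅ V_{s_i w}(λ)` or `V_w(λ)`); `D_i` of a Demazure module is
Demazure; `D_i` is exact on short exact sequences ending in a Demazure module;
and the operators `Dop i` are additive.
-/

open CategoryTheory

/-- Composite of the Demazure operators along a word, rightmost letter applied first. -/
def opAlong {A : Type*} {I : Type*} (Dop : I → A → A) : List I → A → A
  | [] => id
  | i :: l => fun a => Dop i (opAlong Dop l a)

theorem character_of_joseph_of_flag
    {C : Type*} [Category C] [Abelian C] {I : Type*}
    (Di : I → C ⥤ C) [∀ i, (Di i).Additive]
    {A : Type*} [CommRing A]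
    (ch : C → A)
    (hch_iso : ∀ {M N : C}, (M ≅ N) → ch M = ch N)
    (hch_zero : ∀ {M : C}, Limits.IsZero M → ch M = 0)
    (hch_exact : ∀ (S : ShortComplex C), S.ShortExact →
      ch S.X₂ = ch S.X₁ + ch S.X₃)
    (IsDem : C → Prop)
    (hIso : ∀ {M N : C}, (M ≅ N) → IsDem N → IsDem M)
    (hDem : ∀ (i : I) (V : C), IsDem V → IsDem ((Di i).obj V))
    (hexact : ∀ (i : I) (S : ShortComplex C), S.ShortExact → IsDem S.X₃ →
      (S.map (Di i)).ShortExact)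
    (Dop : I → A → A)
    (hDop_add : ∀ (i : I) (a b : A), Dop i (a + b) = Dop i a + Dop i b)
    (hDop_zero : ∀ i : I, Dop i 0 = 0)
    (hbase : ∀ (i : I) (V : C), IsDem V → ch ((Di i).obj V) = Dop i (ch V))
    (l : List I) (M : C) (hM : HasFlag IsDem M) :
    ch ((compAlong Di l).obj M) = opAlong Dop l (ch M) := by
  -- Key lemma: for any N with a flag, `(Di i).obj N` has a flag and its
  -- character is `Dop i (ch N)`.
  have key : ∀ (i : I) (N : C), HasFlag IsDem N →
      HasFlag IsDem ((Di i).obj N) ∧ ch ((Di i).obj N) = Dop i (ch N) := by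
    intro i N hN
    induction hN with
    | @zero N hz =>
        have hz' : Limits.IsZero ((Di i).obj N) := by
          rw [Limits.IsZero.iff_id_eq_zero] at hz ⊢
          rw [← (Di i).map_id, hz, Functor.map_zero]
        exact ⟨HasFlag.zero hz', by rw [hch_zero hz', hch_zero hz, hDop_zero]⟩
    | @step M' M V f g w hse hV hM' ih =>
        obtain ⟨ihflag, ihch⟩ := ih
        have hse' := hexact i (ShortComplex.mk f g w) hse hV
        refine ⟨HasFlag.step _ _ _ hse' (hDem i V hV) ihflag, ?_⟩
        have h1 := hch_exact _ hse'
        have h2 := hch_exact _ hse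
        simp only [ShortComplex.map_X₁, ShortComplex.map_X₂, ShortComplex.map_X₃] at h1 h2 ⊢
        rw [h1, h2, hDop_add, ihch, hbase i V hV]
  induction l with
  | nil => rfl
  | cons i l ih =>
      -- compAlong preserves flags
      have flag : ∀ (l' : List I), HasFlag IsDem ((compAlong Di l').obj M) := by
        intro l'
        induction l' with
        | nil => exact hM
        | cons j l' ihl => exact (key j _ ihl).1
      have := (key i _ (flag l)).2
      simpa [compAlong, opAlong, ih] using this
end

section
/- Let M^1,…,M^p be finite-dimensional h-semisimple cyclic p_{I_0}-modules with generating weight vectors v_1,…,v_p, let N be a finite-dimensional h-semisimple b-module generated by a weight vector u, and let c_1,…,c_p be pairwise distinct nonzero complex numbers. Then N ⊗ M^1_{c_1} ⊗ ··· ⊗ M^p_{c_p} is generated as a b'-module by u ⊗ v_1' ⊗ ··· ⊗ v_p'. -/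
/-!
STATEMENT 17: Let `M¹, …, M^p` be finite-dimensional `h`-semisimple cyclic
`p_{I₀}`-modules with generating weight vectors `v_j`, `N` a
finite-dimensional `h`-semisimple `b`-module generated by a weight vector
`u`, and `c₁, …, c_p` pairwise distinct nonzero complex numbers.  Then
`N ⊗ M¹_{c₁} ⊗ ⋯ ⊗ M^p_{c_p}` is generated as a `b'`-module by
`u ⊗ v₁' ⊗ ⋯ ⊗ v_p'`.

Model: a module over the current algebra `p'_{I₀} = g₀ ⊗ ℂ[t] ⊕ ℂK` is
described by the operators of the elements `x ⊗ t^k` (`x` running through a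
set `X` of elements of `g₀`, `k ∈ ℕ`): on `M j` these are `a j x k`, on `N`
they are `bN x k` (used only for `x ⊗ t^k ∈ b'`, the pairs recorded in the
set `Xb`, which contains all `(x,k)` with `k ≥ 1` since
`g₀ ⊗ tℂ[t] ⊆ b'`).  By finite dimensionality, `g₀ ⊗ t^L ℂ[t]` acts
trivially on every factor.  On the twisted module `M^j_{c_j} = φ_{c_j}^* M^j`
the element `x ⊗ t^k` acts by `Σ_q binom(k,q) c_j^{k−q} a j x q`, and on the
tensor product by the Leibniz rule.  Generation of a module by a vector `z`
under a family of operators is expressed as: every subspace containing `z`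
and stable under the operators is the whole space.
-/

open scoped TensorProduct



open Polynomial in
private lemma polyexp : ∀ (n : ℕ) (c : Fin n → ℂ), Function.Injective c → (∀ j, c j ≠ 0) →
    ∀ (K : ℕ) (P : Fin n → ℂ[X]),
      (∀ k : ℕ, K ≤ k → ∑ j, (P j).eval (k : ℂ) * c j ^ k = 0) → ∀ j, P j = 0 := by
  intro n
  induction n with
  | zero => intro _ _ _ _ _ _ j; exact j.elim0
  | succ n ih =>
    intro c hcinj hc0 K
    have base : ∀ P : Fin (n+1) → ℂ[X],
        (∀ k : ℕ, K ≤ k → ∑ j, (P j).eval (k : ℂ) * c j ^ k = 0) →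
        P (Fin.last n) = 0 → ∀ j, P j = 0 := by
      intro P hsum hlast
      have h' : ∀ k : ℕ, K ≤ k →
          ∑ i : Fin n, ((P ∘ Fin.castSucc) i).eval (k:ℂ) * ((c ∘ Fin.castSucc) i) ^ k = 0 := by
        intro k hk
        have h0 := hsum k hk
        rw [Fin.sum_univ_castSucc, hlast, eval_zero, zero_mul, add_zero] at h0
        simpa using h0
      have hz := ih (c ∘ Fin.castSucc) (hcinj.comp (Fin.castSucc_injective n))
        (fun j => hc0 _) K (P ∘ Fin.castSucc) h'
      intro j
      rcases Fin.eq_castSucc_or_eq_last j with ⟨i, rfl⟩ | rfl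
      · exact hz i
      · exact hlast
    have hfin : ∀ P : Fin (n+1) → ℂ[X],
        (∀ k : ℕ, K ≤ k → ∑ j, (P j).eval (k : ℂ) * c j ^ k = 0) →
        (∀ j, c j • (P j).comp (X + 1) - c (Fin.last n) • P j = 0) → ∀ j, P j = 0 := by
      intro P hsum hP'
      have hcast : ∀ i : Fin n, P (Fin.castSucc i) = 0 := by
        intro i
        by_contra hne
        have h1 : c (Fin.castSucc i) • (P (Fin.castSucc i)).comp (X+1)
            = c (Fin.last n) • P (Fin.castSucc i) := sub_eq_zero.mp (hP' _)
        have hd : ((P (Fin.castSucc i)).comp (X+1)).leadingCoeff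
            = (P (Fin.castSucc i)).leadingCoeff := by
          rw [← C_1, leadingCoeff_comp (by rw [natDegree_X_add_C]; exact one_ne_zero),
            leadingCoeff_X_add_C, one_pow, mul_one]
        have h2 := congrArg leadingCoeff h1
        rw [smul_eq_C_mul, smul_eq_C_mul, leadingCoeff_mul, leadingCoeff_mul,
          leadingCoeff_C, leadingCoeff_C, hd] at h2
        have h3 : c (Fin.castSucc i) = c (Fin.last n) :=
          mul_right_cancel₀ (leadingCoeff_ne_zero.mpr hne) h2
        exact absurd (hcinj h3) (Fin.castSucc_lt_last i).ne
      have hlast : P (Fin.last n) = 0 := by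
        apply eq_zero_of_infinite_isRoot
        apply Set.Infinite.mono (s := (fun k : ℕ => (k:ℂ)) '' Set.Ici K)
        · rintro _ ⟨k, hk, rfl⟩
          have h0 := hsum k hk
          rw [Fin.sum_univ_castSucc] at h0
          simp only [hcast, eval_zero, zero_mul, Finset.sum_const_zero, zero_add] at h0
          exact (mul_eq_zero.mp h0).resolve_right (pow_ne_zero _ (hc0 _))
        · exact (Set.Ici_infinite K).image (fun a _ b _ h => Nat.cast_injective h)
      intro j
      rcases Fin.eq_castSucc_or_eq_last j with ⟨i, rfl⟩ | rfl
      · exact hcast i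
      · exact hlast
    have htrans : ∀ P : Fin (n+1) → ℂ[X],
        (∀ k : ℕ, K ≤ k → ∑ j, (P j).eval (k : ℂ) * c j ^ k = 0) →
        (∀ k : ℕ, K ≤ k →
          ∑ j, (c j • (P j).comp (X + 1) - c (Fin.last n) • P j).eval (k : ℂ) * c j ^ k = 0) := by
      intro P hsum k hk
      have e1 : ∀ j : Fin (n+1), (c j • (P j).comp (X + 1) - c (Fin.last n) • P j).eval (k:ℂ) * c j ^ k
          = (P j).eval (((k+1 : ℕ)):ℂ) * c j ^ (k+1)
            - c (Fin.last n) * ((P j).eval (k:ℂ) * c j ^ k) := by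
        intro j
        simp only [eval_sub, eval_smul, eval_comp, eval_add, eval_X, eval_one, smul_eq_mul]
        push_cast
        ring
      rw [Finset.sum_congr rfl (fun j _ => e1 j), Finset.sum_sub_distrib, ← Finset.mul_sum,
        hsum (k+1) (hk.trans (Nat.le_succ k)), hsum k hk, mul_zero, sub_zero]
    have hstep : ∀ d : ℕ, ∀ P : Fin (n+1) → ℂ[X],
        (∀ k : ℕ, K ≤ k → ∑ j, (P j).eval (k : ℂ) * c j ^ k = 0) →
        (P (Fin.last n)).natDegree ≤ d → ∀ j, P j = 0 := by
      intro d
      induction d with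
      | zero =>
        intro P hsum hdeg
        apply hfin P hsum
        apply base _ (htrans P hsum)
        obtain ⟨x, hx⟩ := natDegree_eq_zero.mp (Nat.le_zero.mp hdeg)
        rw [← hx, C_comp, sub_self]
      | succ d ihd =>
        intro P hsum hdeg
        apply hfin P hsum
        apply ihd _ (htrans P hsum)
        show (c (Fin.last n) • (P (Fin.last n)).comp (X + 1)
            - c (Fin.last n) • P (Fin.last n)).natDegree ≤ d
        rw [← smul_sub]
        refine (natDegree_smul_le _ _).trans ?_
        by_cases hz : (P (Fin.last n)).comp (X + 1) - P (Fin.last n) = 0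
        · simp [hz]
        set f := P (Fin.last n) with hf
        have hfne : f ≠ 0 := by
          intro h; rw [h] at hz; simp at hz
        have hd0 : f.natDegree ≠ 0 := by
          intro h
          obtain ⟨x, hx⟩ := natDegree_eq_zero.mp h
          rw [← hx, C_comp, sub_self] at hz
          exact hz rfl
        have hlc : (f.comp (X+1)).leadingCoeff = f.leadingCoeff := by
          rw [← C_1, leadingCoeff_comp (by rw [natDegree_X_add_C]; exact one_ne_zero),
            leadingCoeff_X_add_C, one_pow, mul_one]
        have hcompne : f.comp (X+1) ≠ 0 := by
          intro h
          apply hfne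
          rw [← leadingCoeff_eq_zero, ← hlc, h, leadingCoeff_zero]
        have hdeg2 : (f.comp (X+1)).degree = f.degree := by
          rw [degree_eq_natDegree hcompne, degree_eq_natDegree hfne, ← C_1, natDegree_comp,
            natDegree_X_add_C, mul_one]
        have hlt : (f.comp (X+1) - f).natDegree < f.natDegree := by
          apply natDegree_lt_natDegree hz
          rw [← hdeg2]
          exact degree_sub_lt hdeg2 hcompne hlc
        exact Nat.lt_succ_iff.mp (lt_of_lt_of_le hlt hdeg)
    intro P hsum
    exact hstep (P (Fin.last n)).natDegree P hsum le_rfl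



open Polynomial in
private lemma coeffs_zero {p L : ℕ} (_hL : 0 < L) (c : Fin p → ℂ)
    (hcinj : Function.Injective c) (hc0 : ∀ j, c j ≠ 0) (s : Fin p → ℕ → ℂ)
    (h : ∀ k : ℕ, L ≤ k →
      ∑ j, ∑ q ∈ Finset.range L, ((k.choose q : ℂ) * c j ^ (k - q)) * s j q = 0) :
    ∀ j q, q < L → s j q = 0 := by
  set P : Fin p → ℂ[X] := fun j =>
    ∑ q ∈ Finset.range L, (s j q * ((c j)⁻¹) ^ q * ((q.factorial : ℂ))⁻¹) • descPochhammer ℂ q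
    with hP
  have heval : ∀ (j : Fin p) (k : ℕ),
      (P j).eval (k : ℂ) = ∑ q ∈ Finset.range L, s j q * ((c j)⁻¹) ^ q * (k.choose q : ℂ) := by
    intro j k
    rw [hP]
    simp only [eval_finset_sum, eval_smul, smul_eq_mul]
    refine Finset.sum_congr rfl fun q _ => ?_
    rw [descPochhammer_eval_eq_descFactorial, Nat.descFactorial_eq_factorial_mul_choose]
    push_cast
    rw [mul_assoc, inv_mul_cancel_left₀ (by exact_mod_cast q.factorial_ne_zero : (q.factorial:ℂ) ≠ 0)]
  have hzero : ∀ j, P j = 0 := by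
    apply polyexp p c hcinj hc0 L
    intro k hk
    have e1 : ∀ j : Fin p, (P j).eval (k:ℂ) * c j ^ k
        = ∑ q ∈ Finset.range L, ((k.choose q : ℂ) * c j ^ (k - q)) * s j q := by
      intro j
      rw [heval, Finset.sum_mul]
      refine Finset.sum_congr rfl fun q hq => ?_
      have hqk : q ≤ k := le_trans (Nat.le_of_lt_succ (Nat.lt_succ_of_lt (Finset.mem_range.mp hq))) hk
      have hck : c j ^ k = c j ^ (k - q) * c j ^ q := by
        rw [← pow_add, Nat.sub_add_cancel hqk]
      rw [hck, show s j q * ((c j)⁻¹)^q * (k.choose q : ℂ) * (c j ^ (k-q) * c j ^ q)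
          = (k.choose q : ℂ) * c j ^ (k-q) * s j q * (((c j)⁻¹)^q * c j ^ q) from by ring,
        inv_pow, inv_mul_cancel₀ (pow_ne_zero _ (hc0 j)), mul_one]
    rw [Finset.sum_congr rfl (fun j _ => e1 j)]
    exact h k hk
  intro j q hq
  have hev : ∀ k : ℕ, ∑ q' ∈ Finset.range L, s j q' * ((c j)⁻¹) ^ q' * (k.choose q' : ℂ) = 0 := by
    intro k
    rw [← heval, hzero, eval_zero]
  have hmu : ∀ q', q' < L → s j q' * ((c j)⁻¹) ^ q' = 0 := by
    intro q'
    induction q' using Nat.strong_induction_on with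
    | _ q' IH =>
      intro hq'L
      have h0 := hev q'
      rw [Finset.sum_eq_single q'] at h0
      · simpa using h0
      · intro b hb hbne
        rcases lt_or_gt_of_ne hbne with hlt | hgt
        · rw [IH b hlt (Finset.mem_range.mp hb), zero_mul]
        · rw [Nat.choose_eq_zero_of_lt hgt, Nat.cast_zero, mul_zero]
      · intro hq'
        exact absurd (Finset.mem_range.mpr hq'L) hq'
  have := hmu q hq
  rcases mul_eq_zero.mp this with h1 | h2
  · exact h1
  · exact absurd h2 (pow_ne_zero _ (inv_ne_zero (hc0 j)))



private lemma mem_span_of_dual {V : Type*} [AddCommGroup V] [Module ℂ V]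
    (s : Set V) (x : V)
    (h : ∀ φ : Module.Dual ℂ V, (∀ y ∈ s, φ y = 0) → φ x = 0) :
    x ∈ Submodule.span ℂ s := by
  rw [← Submodule.Quotient.mk_eq_zero (Submodule.span ℂ s),
    ← Module.forall_dual_apply_eq_zero_iff ℂ]
  intro ψ
  have := h (ψ.comp (Submodule.span ℂ s).mkQ) ?_
  · simpa using this
  · intro y hy
    rw [LinearMap.comp_apply,
      show (Submodule.span ℂ s).mkQ y = Submodule.Quotient.mk y from rfl,
      (Submodule.Quotient.mk_eq_zero _).mpr (Submodule.subset_span hy), map_zero]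

section pi
variable {p : ℕ} {M : Fin p → Type*} [∀ j, AddCommGroup (M j)] [∀ j, Module ℂ (M j)]

private lemma update_apply_family (j : Fin p) (g : M j →ₗ[ℂ] M j) (m : ∀ i, M i) :
    (fun i => Function.update (fun i : Fin p => (LinearMap.id : M i →ₗ[ℂ] M i)) j g i (m i))
      = Function.update m j (g (m j)) := by
  funext i
  exact Function.apply_update (fun i (φ : M i →ₗ[ℂ] M i) => φ (m i)) (fun _ => LinearMap.id) j g i

private lemma piMap_update_sum (j : Fin p) {α : Type*} (t : Finset α) (γ : α → ℂ)
    (f : α → (M j →ₗ[ℂ] M j)) :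
    PiTensorProduct.map (Function.update (fun i : Fin p => (LinearMap.id : M i →ₗ[ℂ] M i)) j
        (∑ q ∈ t, γ q • f q))
      = ∑ q ∈ t, γ q • PiTensorProduct.map
          (Function.update (fun i : Fin p => (LinearMap.id : M i →ₗ[ℂ] M i)) j (f q)) := by
  apply PiTensorProduct.ext
  apply MultilinearMap.ext
  intro m
  simp only [LinearMap.compMultilinearMap_apply, PiTensorProduct.map_tprod,
    LinearMap.sum_apply, LinearMap.smul_apply]
  rw [update_apply_family, LinearMap.sum_apply]
  have : ∀ q, (γ q • f q) (m j) = γ q • (f q (m j)) := fun q => rfl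
  rw [Finset.sum_congr rfl fun q _ => this q, MultilinearMap.map_update_sum]
  refine Finset.sum_congr rfl fun q _ => ?_
  rw [(PiTensorProduct.tprod ℂ).map_update_smul, update_apply_family]

private lemma piMap_update_zero (j : Fin p) :
    PiTensorProduct.map (Function.update (fun i : Fin p => (LinearMap.id : M i →ₗ[ℂ] M i)) j
        (0 : M j →ₗ[ℂ] M j)) = 0 := by
  apply PiTensorProduct.ext
  apply MultilinearMap.ext
  intro m
  simp only [LinearMap.compMultilinearMap_apply, PiTensorProduct.map_tprod]
  rw [update_apply_family]
  simp

end pi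

section tens
variable {p : ℕ} {N : Type*} [AddCommGroup N] [Module ℂ N]
  {M : Fin p → Type*} [∀ j, AddCommGroup (M j)] [∀ j, Module ℂ (M j)]

private noncomputable def Sop (j : Fin p) (g : M j →ₗ[ℂ] M j) :
    (N ⊗[ℂ] (⨂[ℂ] i, M i)) →ₗ[ℂ] (N ⊗[ℂ] (⨂[ℂ] i, M i)) :=
  TensorProduct.map LinearMap.id
    (PiTensorProduct.map (Function.update (fun i : Fin p => (LinearMap.id : M i →ₗ[ℂ] M i)) j g))

private lemma lTensor_sum_smul {α : Type*} (t : Finset α) (γ : α → ℂ)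
    (g : α → ((⨂[ℂ] i, M i) →ₗ[ℂ] (⨂[ℂ] i, M i))) :
    TensorProduct.map (LinearMap.id : N →ₗ[ℂ] N) (∑ q ∈ t, γ q • g q)
      = ∑ q ∈ t, γ q • TensorProduct.map LinearMap.id (g q) := by
  apply TensorProduct.ext'
  intro n y
  simp [TensorProduct.map_tmul, LinearMap.sum_apply, LinearMap.smul_apply,
    TensorProduct.tmul_sum, TensorProduct.tmul_smul]

private lemma Sop_sum (j : Fin p) {α : Type*} (t : Finset α) (γ : α → ℂ)
    (f : α → (M j →ₗ[ℂ] M j)) :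
    (TensorProduct.map (LinearMap.id : N →ₗ[ℂ] N)
        (PiTensorProduct.map (Function.update
          (fun i : Fin p => (LinearMap.id : M i →ₗ[ℂ] M i)) j (∑ q ∈ t, γ q • f q))))
      = ∑ q ∈ t, γ q • Sop j (f q) := by
  rw [piMap_update_sum, lTensor_sum_smul]
  rfl

private lemma Sop_zero (j : Fin p) : (Sop j (0 : M j →ₗ[ℂ] M j) :
    (N ⊗[ℂ] (⨂[ℂ] i, M i)) →ₗ[ℂ] (N ⊗[ℂ] (⨂[ℂ] i, M i))) = 0 := by
  rw [Sop, piMap_update_zero]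
  apply TensorProduct.ext'
  intro n y
  simp

private lemma Sop_tmul (j : Fin p) (g : M j →ₗ[ℂ] M j) (n : N) (m : ∀ i, M i) :
    Sop j g (n ⊗ₜ[ℂ] PiTensorProduct.tprod ℂ m)
      = n ⊗ₜ[ℂ] PiTensorProduct.tprod ℂ (Function.update m j (g (m j))) := by
  rw [Sop]
  simp only [TensorProduct.map_tmul, LinearMap.id_coe, id_eq, PiTensorProduct.map_tprod]
  rw [update_apply_family]

private lemma rT_zero : (TensorProduct.map (0 : N →ₗ[ℂ] N)
    (LinearMap.id : (⨂[ℂ] i, M i) →ₗ[ℂ] (⨂[ℂ] i, M i))) = 0 := by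
  apply TensorProduct.ext'
  intro n y
  simp

end tens


theorem tensor_product_cyclic_over_b'
    {p L : ℕ} (hL : 0 < L)
    (c : Fin p → ℂ) (hcinj : Function.Injective c) (hc0 : ∀ j, c j ≠ 0)
    {X : Type*}
    {N : Type*} [AddCommGroup N] [Module ℂ N] [FiniteDimensional ℂ N]
    {M : Fin p → Type*} [∀ j, AddCommGroup (M j)] [∀ j, Module ℂ (M j)]
    [∀ j, FiniteDimensional ℂ (M j)]
    (a : (j : Fin p) → X → ℕ → (M j →ₗ[ℂ] M j))
    (bN : X → ℕ → (N →ₗ[ℂ] N))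
    (Xb : Set (X × ℕ))
    (hXb : ∀ (x : X) (k : ℕ), 1 ≤ k → (x, k) ∈ Xb)
    (hvanM : ∀ (j : Fin p) (x : X) (k : ℕ), L ≤ k → a j x k = 0)
    (hvanN : ∀ (x : X) (k : ℕ), L ≤ k → bN x k = 0)
    (v : (j : Fin p) → M j) (u : N)
    (hMcyc : ∀ (j : Fin p) (Wm : Submodule ℂ (M j)), v j ∈ Wm →
      (∀ (x : X) (k : ℕ), ∀ m ∈ Wm, a j x k m ∈ Wm) → Wm = ⊤)
    (hNcyc : ∀ Wn : Submodule ℂ N, u ∈ Wn →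
      (∀ (x : X) (k : ℕ), (x, k) ∈ Xb → ∀ n ∈ Wn, bN x k n ∈ Wn) → Wn = ⊤) :
    ∀ Wsub : Submodule ℂ (N ⊗[ℂ] (⨂[ℂ] j, M j)),
      (u ⊗ₜ[ℂ] (PiTensorProduct.tprod ℂ v)) ∈ Wsub →
      (∀ (x : X) (k : ℕ), (x, k) ∈ Xb → ∀ w ∈ Wsub,
        (TensorProduct.map (bN x k)
            (LinearMap.id : (⨂[ℂ] i, M i) →ₗ[ℂ] (⨂[ℂ] i, M i))
          + ∑ j : Fin p, TensorProduct.map (LinearMap.id : N →ₗ[ℂ] N)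
              (PiTensorProduct.map (Function.update
                (fun i : Fin p => (LinearMap.id : M i →ₗ[ℂ] M i)) j
                (∑ q ∈ Finset.range (k + 1),
                  ((k.choose q : ℂ) * c j ^ (k - q)) • a j x q)))) w ∈ Wsub) →
      Wsub = ⊤ := by
  intro Wsub hu hstab
  classical
  -- `U`: the subalgebra (as subspace) of endomorphisms preserving `Wsub`
  let U : Submodule ℂ ((N ⊗[ℂ] (⨂[ℂ] i, M i)) →ₗ[ℂ] (N ⊗[ℂ] (⨂[ℂ] i, M i))) :=
    { carrier := {T | ∀ w ∈ Wsub, T w ∈ Wsub}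
      add_mem' := fun hT hS w hw => by
        rw [LinearMap.add_apply]; exact Wsub.add_mem (hT w hw) (hS w hw)
      zero_mem' := fun w hw => by rw [LinearMap.zero_apply]; exact Wsub.zero_mem
      smul_mem' := fun r T hT w hw => by
        rw [LinearMap.smul_apply]; exact Wsub.smul_mem r (hT w hw) }
  have hUmem : ∀ T : ((N ⊗[ℂ] (⨂[ℂ] i, M i)) →ₗ[ℂ] (N ⊗[ℂ] (⨂[ℂ] i, M i))),
      T ∈ U ↔ ∀ w ∈ Wsub, T w ∈ Wsub := fun T => Iff.rfl
  -- rewrite the given operator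
  have hTop : ∀ (x : X) (k : ℕ),
      (TensorProduct.map (bN x k)
          (LinearMap.id : (⨂[ℂ] i, M i) →ₗ[ℂ] (⨂[ℂ] i, M i))
        + ∑ j : Fin p, TensorProduct.map (LinearMap.id : N →ₗ[ℂ] N)
            (PiTensorProduct.map (Function.update
              (fun i : Fin p => (LinearMap.id : M i →ₗ[ℂ] M i)) j
              (∑ q ∈ Finset.range (k + 1),
                ((k.choose q : ℂ) * c j ^ (k - q)) • a j x q))))
      = TensorProduct.map (bN x k) LinearMap.id
        + ∑ j : Fin p, ∑ q ∈ Finset.range (k + 1),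
            ((k.choose q : ℂ) * c j ^ (k - q)) • Sop j (a j x q) := by
    intro x k
    congr 1
    exact Finset.sum_congr rfl fun j _ => Sop_sum j _ _ _
  -- for `k ≥ L` the operator is `F x k`
  have hFopU : ∀ (x : X) (k : ℕ), L ≤ k →
      (∑ j : Fin p, ∑ q ∈ Finset.range L,
        ((k.choose q : ℂ) * c j ^ (k - q)) • Sop j (a j x q)) ∈ U := by
    intro x k hk w hw
    have h1 := hstab x k (hXb x k (hL.trans_le hk)) w hw
    rw [hTop x k, hvanN x k hk, rT_zero, zero_add] at h1
    have h3 : (∑ j : Fin p, ∑ q ∈ Finset.range (k + 1),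
          ((k.choose q : ℂ) * c j ^ (k - q)) • Sop (N := N) j (a j x q))
        = ∑ j : Fin p, ∑ q ∈ Finset.range L,
          ((k.choose q : ℂ) * c j ^ (k - q)) • Sop (N := N) j (a j x q) := by
      refine Finset.sum_congr rfl fun j _ => ?_
      symm
      apply Finset.sum_subset
      · intro q hq
        exact Finset.mem_range.mpr ((Finset.mem_range.mp hq).trans_le (hk.trans (Nat.le_succ k)))
      · intro q _ hqL
        rw [hvanM j x q (le_of_not_gt fun hc => hqL (Finset.mem_range.mpr hc)), Sop_zero,
          smul_zero]
    rwa [h3] at h1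
  -- each `Sop j (a j x q)` preserves `Wsub`
  have hSU : ∀ (x : X) (j : Fin p) (q : ℕ), Sop j (a j x q) ∈ U := by
    intro x j q
    by_cases hqL : q < L
    · set G : Set ((N ⊗[ℂ] (⨂[ℂ] i, M i)) →ₗ[ℂ] (N ⊗[ℂ] (⨂[ℂ] i, M i))) :=
          {T | ∃ k, L ≤ k ∧
            T = ∑ j' : Fin p, ∑ q' ∈ Finset.range L,
              ((k.choose q' : ℂ) * c j' ^ (k - q')) • Sop j' (a j' x q')} with hG
      have hspan : Sop (N := N) j (a j x q) ∈ Submodule.span ℂ G := by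
        refine mem_span_of_dual G _ ?_
        intro φ hφ
        have hv : ∀ k : ℕ, L ≤ k → ∑ j' : Fin p, ∑ q' ∈ Finset.range L,
            ((k.choose q' : ℂ) * c j' ^ (k - q')) * φ (Sop j' (a j' x q')) = 0 := by
          intro k hk
          have h6 := hφ _ ⟨k, hk, rfl⟩
          rw [map_sum] at h6
          simp only [map_sum, map_smul, smul_eq_mul] at h6
          exact h6
        exact coeffs_zero hL c hcinj hc0 _ hv j q hqL
      have hgen : G ⊆ (U : Set _) := by
        rintro T ⟨k, hk, rfl⟩
        exact hFopU x k hk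
      exact Submodule.span_le.mpr hgen hspan
    · rw [hvanM j x q (le_of_not_gt hqL), Sop_zero]
      exact U.zero_mem
  -- the `b`-part preserves `Wsub`
  have hrTU : ∀ (x : X) (k : ℕ), (x, k) ∈ Xb →
      (TensorProduct.map (bN x k)
        (LinearMap.id : (⨂[ℂ] i, M i) →ₗ[ℂ] (⨂[ℂ] i, M i))) ∈ U := by
    intro x k hxk w hw
    have h1 := hstab x k hxk w hw
    rw [hTop x k, LinearMap.add_apply] at h1
    have h2 : (∑ j : Fin p, ∑ q ∈ Finset.range (k + 1),
        ((k.choose q : ℂ) * c j ^ (k - q)) • Sop (N := N) j (a j x q)) ∈ U := by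
      refine Submodule.sum_mem _ fun j _ => Submodule.sum_mem _ fun q _ => ?_
      exact U.smul_mem _ (hSU x j q)
    have h2w := (hUmem _).mp h2 w hw
    have h5 := Wsub.sub_mem h1 h2w
    rwa [add_sub_cancel_right] at h5
  -- main generation argument
  have claimT : ∀ S : Finset (Fin p), ∀ m : (∀ j, M j), (∀ i, i ∉ S → m i = v i) →
      ∀ n : N, (n ⊗ₜ[ℂ] PiTensorProduct.tprod ℂ m) ∈ Wsub := by
    intro S
    induction S using Finset.induction_on with
    | empty =>
      intro m hm n
      have hmv : m = v := funext fun i => hm i (Finset.notMem_empty i)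
      rw [hmv]
      have hWn : Wsub.comap ((TensorProduct.mk ℂ N (⨂[ℂ] i, M i)).flip
          (PiTensorProduct.tprod ℂ v)) = ⊤ := by
        apply hNcyc
        · rw [Submodule.mem_comap]
          simpa using hu
        · intro x k hxk n' hn'
          rw [Submodule.mem_comap] at hn' ⊢
          simp only [LinearMap.flip_apply, TensorProduct.mk_apply] at hn' ⊢
          have h4 := hrTU x k hxk _ hn'
          rwa [TensorProduct.map_tmul, LinearMap.id_apply] at h4
      have hn : n ∈ Wsub.comap ((TensorProduct.mk ℂ N (⨂[ℂ] i, M i)).flip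
          (PiTensorProduct.tprod ℂ v)) := by
        rw [hWn]; exact Submodule.mem_top
      rw [Submodule.mem_comap] at hn
      simpa using hn
    | @insert j S hjS IH =>
      intro m hm n
      have hFapp : ∀ w : M j, ((TensorProduct.mk ℂ N (⨂[ℂ] i, M i) n).comp
          ((PiTensorProduct.tprod ℂ (s := M)).toLinearMap m j)) w
          = n ⊗ₜ[ℂ] PiTensorProduct.tprod ℂ (Function.update m j w) := fun w => rfl
      have hWm : Wsub.comap ((TensorProduct.mk ℂ N (⨂[ℂ] i, M i) n).comp
          ((PiTensorProduct.tprod ℂ (s := M)).toLinearMap m j)) = ⊤ := by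
        apply hMcyc j
        · rw [Submodule.mem_comap, hFapp]
          apply IH
          intro i hiS
          by_cases hij : i = j
          · subst hij; rw [Function.update_self]
          · rw [Function.update_of_ne hij]
            exact hm i (by simp [Finset.mem_insert, hij, hiS])
        · intro x k w hw
          rw [Submodule.mem_comap, hFapp] at hw ⊢
          have h5 := hSU x j k _ hw
          rw [Sop_tmul] at h5
          simpa only [Function.update_self, Function.update_idem] using h5
      have hmj : m j ∈ Wsub.comap ((TensorProduct.mk ℂ N (⨂[ℂ] i, M i) n).comp
          ((PiTensorProduct.tprod ℂ (s := M)).toLinearMap m j)) := by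
        rw [hWm]; exact Submodule.mem_top
      rw [Submodule.mem_comap, hFapp, Function.update_eq_self] at hmj
      exact hmj
  rw [eq_top_iff, ← TensorProduct.span_tmul_eq_top ℂ N (⨂[ℂ] i, M i), Submodule.span_le]
  rintro _ ⟨n, z, rfl⟩
  have hz : z ∈ Wsub.comap (TensorProduct.mk ℂ N (⨂[ℂ] i, M i) n) := by
    have htop : (⊤ : Submodule ℂ (⨂[ℂ] i, M i))
        ≤ Wsub.comap (TensorProduct.mk ℂ N (⨂[ℂ] i, M i) n) := by
      rw [← PiTensorProduct.span_tprod_eq_top, Submodule.span_le]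
      rintro _ ⟨m, rfl⟩
      rw [SetLike.mem_coe, Submodule.mem_comap, TensorProduct.mk_apply]
      exact claimT Finset.univ m (fun i hi => absurd (Finset.mem_univ i) hi) n
    exact htop Submodule.mem_top
  rw [Submodule.mem_comap, TensorProduct.mk_apply] at hz
  exact hz
end
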